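/- Every flow assignment f (antisymmetric function on darts respecting capacities) can be decomposed as f = ρ + g where ρ is a circulation (obeys conservation at all nodes) and g is an acyclic flow assignment, i.e., there is no directed cycle all of whose darts carry strictly positive g-flow. -/

import Mathlib

/-!
Induct on the number of darts carrying positive flow. If `f` has a cycle of positive darts,
subtract from it a multiple of the cycle's unit flow (a circulation) chosen to bring a bottleneck
dart down to zero. No dart becomes positive, since a dart and its reverse never both carry
positive flow, so the positive support shrinks; what is subtracted is collected into `ρ`.
-/

/-- A directed graph given by darts: each dart has a tail, a head, and a reverse dart. -/
structure Dgraph (V D : Type) where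
  tail : D → V
  head : D → V
  rev : D → D
  rev_rev : ∀ d, rev (rev d) = d
  tail_rev : ∀ d, tail (rev d) = head d
  head_rev : ∀ d, head (rev d) = tail d

namespace Dgraph

variable {V D : Type}

/-- an antisymmetric flow assignment -/
def Antisym (G : Dgraph V D) (f : D → ℝ) : Prop :=
  ∀ d, f (G.rev d) = - f d

/-- net inflow of a flow assignment at a node -/
noncomputable def inflow [Fintype D] [DecidableEq V] (G : Dgraph V D) (f : D → ℝ) (v : V) : ℝ :=
  ∑ d ∈ Finset.univ.filter (fun d => G.head d = v), f d

/-- one step along a dart of strictly positive capacity -/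
def ResStep (G : Dgraph V D) (cap : D → ℝ) (u v : V) : Prop :=
  ∃ d, G.tail d = u ∧ G.head d = v ∧ 0 < cap d

/-- existence of a path all of whose darts have strictly positive capacity -/
def ResReach (G : Dgraph V D) (cap : D → ℝ) (u v : V) : Prop :=
  Relation.ReflTransGen (G.ResStep cap) u v

/-- a pseudoflow: antisymmetric and respecting all capacities -/
def Pseudoflow (G : Dgraph V D) (c f : D → ℝ) : Prop :=
  G.Antisym f ∧ ∀ d, f d ≤ c d

end Dgraph

namespace Dgraph

open Finset

variable {V D : Type}

section Antisym

variable {G : Dgraph V D} {f g : D → ℝ}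

theorem Antisym.sub (hf : G.Antisym f) (hg : G.Antisym g) :
    G.Antisym (f - g) := fun d => by simp [hf d, hg d]; ring

theorem Antisym.add (hf : G.Antisym f) (hg : G.Antisym g) :
    G.Antisym (f + g) := fun d => by simp [hf d, hg d]; ring

theorem Antisym.smul (hf : G.Antisym f) (a : ℝ) : G.Antisym (a • f) :=
  fun d => by simp [hf d]

end Antisym

variable (G : Dgraph V D)

theorem inflow_add [Fintype D] [DecidableEq V] (f g : D → ℝ) (v : V) :
    G.inflow (f + g) v = G.inflow f v + G.inflow g v :=
  sum_add_distrib

theorem inflow_smul [Fintype D] [DecidableEq V] (a : ℝ) (f : D → ℝ) (v : V) :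
    G.inflow (a • f) v = a * G.inflow f v :=
  (mul_sum ..).symm

/-- The darts of a walk from `u` to `v`: each dart's head is the next dart's tail. -/
def IsWalk (L : List D) (u v : V) : Prop :=
  L.map G.tail ++ [v] = u :: L.map G.head

theorem exists_walk_of_transGen {cap : D → ℝ} {u v : V}
    (h : Relation.TransGen (G.ResStep cap) u v) :
    ∃ L : List D, L ≠ [] ∧ (∀ d ∈ L, 0 < cap d) ∧ G.IsWalk L u v := by
  induction h with
  | single hstep =>
    obtain ⟨d, rfl, rfl, hd⟩ := hstep
    exact ⟨[d], by simp, by simpa using hd, rfl⟩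
  | tail _ hstep ih =>
    obtain ⟨L, -, hpos, hL⟩ := ih
    obtain ⟨d, rfl, rfl, hd⟩ := hstep
    refine ⟨L ++ [d], by simp, ?_, ?_⟩
    · simpa [or_imp, forall_and] using ⟨hpos, hd⟩
    · simpa [IsWalk] using congrArg (· ++ [G.head d]) hL

theorem IsWalk.count_map_tail_eq_count_map_head [DecidableEq V] {L : List D} {v : V}
    (hL : G.IsWalk L v v) (w : V) : (L.map G.tail).count w = (L.map G.head).count w := by
  simpa [List.count_cons, List.count_append] using congrArg (List.count w) hL

theorem sum_count_filter_eq_count_map [Fintype D] [DecidableEq D] [DecidableEq V]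
    (t : D → V) (L : List D) (w : V) :
    ∑ d ∈ univ.filter (t · = w), L.count d = (L.map t).count w := by
  induction L with
  | nil => simp
  | cons a L ih =>
    simp only [List.count_cons, sum_add_distrib, ih, List.map_cons, beq_iff_eq]
    simp [eq_comm]

def walkFlow [DecidableEq D] (L : List D) (d : D) : ℝ :=
  L.count d - L.count (G.rev d)

theorem antisym_walkFlow [DecidableEq D] (L : List D) : G.Antisym (G.walkFlow L) := by
  intro d
  simp [walkFlow, G.rev_rev]

theorem inflow_walkFlow_eq_zero [Fintype D] [DecidableEq D] [DecidableEq V] {L : List D}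
    {v : V} (hL : G.IsWalk L v v) (w : V) : G.inflow (G.walkFlow L) w = 0 := by
  have hrev : ∑ d ∈ univ.filter (G.head · = w), (L.count (G.rev d) : ℝ)
      = ∑ d ∈ univ.filter (G.tail · = w), (L.count d : ℝ) :=
    sum_nbij' G.rev G.rev (by simp [G.tail_rev]) (by simp [G.head_rev])
      (fun d _ => G.rev_rev d) (fun d _ => G.rev_rev d) (fun _ _ => rfl)
  simp only [inflow, walkFlow, sum_sub_distrib, hrev]
  rw [← Nat.cast_sum, ← Nat.cast_sum, sum_count_filter_eq_count_map,
    sum_count_filter_eq_count_map, hL.count_map_tail_eq_count_map_head, sub_self]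

noncomputable def posSupport [Fintype D] (f : D → ℝ) : Finset D :=
  univ.filter (0 < f ·)

@[simp]
theorem mem_posSupport [Fintype D] {f : D → ℝ} {d : D} : d ∈ posSupport f ↔ 0 < f d := by
  simp [posSupport]

/-- Cancelling `L` with the largest multiple `ε` of its unit flow that keeps every dart of `L`
nonnegative saturates a bottleneck dart, and creates no new positive dart. -/
theorem exists_card_posSupport_sub_walkFlow_lt [Fintype D] [DecidableEq D] {f : D → ℝ}
    (hf : G.Antisym f) {L : List D} (hL : L ≠ []) (hpos : ∀ d ∈ L, 0 < f d) :
    ∃ ε : ℝ, #(posSupport (f - ε • G.walkFlow L)) < #(posSupport f) := by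
  obtain ⟨d₀, hd₀, hmin⟩ := L.toFinset.exists_min_image (fun d => f d / L.count d)
    (List.toFinset_nonempty_iff L |>.mpr hL)
  rw [List.mem_toFinset] at hd₀
  set ε := f d₀ / L.count d₀
  have hcount {d} (hd : d ∈ L) : (0 : ℝ) < L.count d := by exact_mod_cast List.count_pos_iff.2 hd
  have hε_count {d} (hd : d ∈ L) : ε * L.count d ≤ f d :=
    (le_div_iff₀ (hcount hd)).1 (hmin d (List.mem_toFinset.2 hd))
  have hrev {d} (hd : d ∈ L) : G.rev d ∉ L := fun hrd => by
    have := hpos _ hrd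
    linarith [hf d, hpos d hd]
  refine ⟨ε, card_lt_card <| (ssubset_iff_of_subset fun d => ?_).2 ⟨d₀, ?_, ?_⟩⟩
  · simp only [mem_posSupport, Pi.sub_apply, Pi.smul_apply, smul_eq_mul, walkFlow]
    intro hd
    by_cases hdL : d ∈ L
    · exact hpos d hdL
    by_cases hrdL : G.rev d ∈ L
    · have := hε_count hrdL
      rw [List.count_eq_zero.2 hdL, Nat.cast_zero] at hd
      linarith [hf d]
    · simpa [List.count_eq_zero.2 hdL, List.count_eq_zero.2 hrdL] using hd
  · simpa using hpos d₀ hd₀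
  · have hsat : ε * L.count d₀ = f d₀ := div_mul_cancel₀ _ (hcount hd₀).ne'
    simp [walkFlow, List.count_eq_zero.2 (hrev hd₀), hsat]

end Dgraph

theorem stmt4_general {V D : Type} [Fintype D] [DecidableEq V]
    (G : Dgraph V D) (f : D → ℝ)
    (hanti : G.Antisym f) :
    ∃ ρ g : D → ℝ,
      G.Antisym ρ ∧ (∀ v, G.inflow ρ v = 0) ∧
      G.Antisym g ∧
      (∀ v, ¬ Relation.TransGen (G.ResStep g) v v) ∧
      (∀ d, f d = ρ d + g d) := by
  classical
  induction hn : (Dgraph.posSupport f).card using Nat.strong_induction_on generalizing f with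
  | _ n ih =>
  by_cases hacyclic : ∀ v, ¬ Relation.TransGen (G.ResStep f) v v
  · exact ⟨0, f, fun d => by simp, fun v => by simp [Dgraph.inflow], hanti, hacyclic, fun d => by simp⟩
  push Not at hacyclic
  obtain ⟨v, hcycle⟩ := hacyclic
  obtain ⟨L, hL, hpos, hwalk⟩ := G.exists_walk_of_transGen hcycle
  obtain ⟨ε, hlt⟩ := G.exists_card_posSupport_sub_walkFlow_lt hanti hL hpos
  have hσ : G.Antisym (ε • G.walkFlow L) := (G.antisym_walkFlow L).smul ε
  obtain ⟨ρ, g, hρ, hρ_inflow, hg, hg_acyclic, hsum⟩ := ih _ (hn ▸ hlt) _ (hanti.sub hσ) rfl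
  refine ⟨ρ + ε • G.walkFlow L, g, hρ.add hσ, fun w => ?_, hg, hg_acyclic, fun d => ?_⟩
  · simp [Dgraph.inflow_add, Dgraph.inflow_smul, hρ_inflow, G.inflow_walkFlow_eq_zero hwalk]
  · have := hsum d
    simp only [Pi.add_apply, Pi.sub_apply] at this ⊢
    linarith

/-- decomposition of a flow assignment into a circulation plus an acyclic flow. -/
theorem stmt4 {V D : Type} [Fintype D] [Fintype V] [DecidableEq V]
    (G : Dgraph V D) (c f : D → ℝ)
    (hanti : G.Antisym f) (hcap : ∀ d, f d ≤ c d) :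
    ∃ ρ g : D → ℝ,
      G.Antisym ρ ∧ (∀ v, G.inflow ρ v = 0) ∧
      G.Antisym g ∧
      (∀ v, ¬ Relation.TransGen (G.ResStep g) v v) ∧
      (∀ d, f d = ρ d + g d) :=
  stmt4_general G f hanti
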